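/- arXiv:1612.06268 — 2 statements merged into one kernel-verified Lean document; each statement's English description precedes it below -/
import Mathlib

section
/- Let ζ be a primitive 5th root of unity and α = ζ - ζ² - ζ³ + ζ⁴. Then for any u in ℂ, -4u³ + (3+α)u² - 2(1+α)u + 6 + 2α - 2(-ζ³+3ζ²+2ζ+1)u² = -4(u+ζ²)(u+ζ⁴)(u-ζ³(1+ζ)²). -/
theorem cubic_factorization_minus (ζ : ℂ) (h5 : ζ ^ 5 = 1) (h1 : ζ ≠ 1)
    (α : ℂ) (hα : α = ζ - ζ ^ 2 - ζ ^ 3 + ζ ^ 4) (u : ℂ) :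
    -4 * u ^ 3 + (3 + α) * u ^ 2 - 2 * (1 + α) * u + 6 + 2 * α
      - 2 * (-ζ ^ 3 + 3 * ζ ^ 2 + 2 * ζ + 1) * u ^ 2
    = -4 * (u + ζ ^ 2) * (u + ζ ^ 4) * (u - ζ ^ 3 * (1 + ζ) ^ 2) := by
  have hc : ζ ^ 4 + ζ ^ 3 + ζ ^ 2 + ζ + 1 = 0 := by
    have h : (ζ - 1) * (ζ ^ 4 + ζ ^ 3 + ζ ^ 2 + ζ + 1) = 0 := by linear_combination h5
    rcases mul_eq_zero.mp h with h' | h'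
    · exact absurd (sub_eq_zero.mp h') h1
    · exact h'
  subst hα
  linear_combination (6 - 4*ζ - 4*ζ^2 + 4*ζ^4 + 4*ζ^5 - 4*ζ^6 - 4*ζ^7
    - 2*u + 4*u*ζ^2 - 4*u*ζ^4 - 4*u*ζ^5 + u^2 - 4*u^2*ζ) * hc
end

section
/- Let ζ be a primitive 5th root of unity and α = ζ - ζ² - ζ³ + ζ⁴. For any u ∈ ℂ with (u+1)(u+ζ²)(u+ζ³) ≠ 0, the expression ((-7+3α)/4)·(-2u²+(1+α)u-3α-7)(2u²+(4+2α)u+3α+7)/((-2u²+(1+α)u-2)(u+1)²) equals -ε⁴·(u-(1+ζ)²)(u-ζ(1+ζ)²)(u-ζ²(1+ζ)²)(u-ζ³(1+ζ)²)/((u+ζ²)(u+ζ³)(u+1)²), where ε = ζ + ζ⁴. -/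
theorem X_coordinate_factorization (ζ : ℂ) (h5 : ζ ^ 5 = 1) (h1 : ζ ≠ 1)
    (α ε : ℂ) (hα : α = ζ - ζ ^ 2 - ζ ^ 3 + ζ ^ 4) (hε : ε = ζ + ζ ^ 4)
    (u : ℂ) (hd : (u + 1) * (u + ζ ^ 2) * (u + ζ ^ 3) ≠ 0) :
    (-7 + 3 * α) / 4 *
      ((-2 * u ^ 2 + (1 + α) * u - 3 * α - 7) * (2 * u ^ 2 + (4 + 2 * α) * u + 3 * α + 7)) /
      ((-2 * u ^ 2 + (1 + α) * u - 2) * (u + 1) ^ 2)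
    = -ε ^ 4 * ((u - (1 + ζ) ^ 2) * (u - ζ * (1 + ζ) ^ 2) *
        (u - ζ ^ 2 * (1 + ζ) ^ 2) * (u - ζ ^ 3 * (1 + ζ) ^ 2)) /
      ((u + ζ ^ 2) * (u + ζ ^ 3) * (u + 1) ^ 2) := by
  subst hα hε
  have h1' : u + 1 ≠ 0 := fun h => hd (by rw [h]; ring)
  have h2' : u + ζ ^ 2 ≠ 0 := fun h => hd (by rw [h]; ring)
  have h3' : u + ζ ^ 3 ≠ 0 := fun h => hd (by rw [h]; ring)
  have hΦ : ζ ^ 4 + ζ ^ 3 + ζ ^ 2 + ζ + 1 = 0 := by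
    have hne : ζ - 1 ≠ 0 := sub_ne_zero.mpr h1
    have h : (ζ - 1) * (ζ ^ 4 + ζ ^ 3 + ζ ^ 2 + ζ + 1) = 0 := by linear_combination h5
    exact (mul_eq_zero.mp h).resolve_left hne
  have hB : -2 * u ^ 2 + (1 + (ζ - ζ ^ 2 - ζ ^ 3 + ζ ^ 4)) * u - 2 =
      -2 * ((u + ζ ^ 2) * (u + ζ ^ 3)) := by
    linear_combination u * hΦ + 2 * h5
  have hBne : -2 * u ^ 2 + (1 + (ζ - ζ ^ 2 - ζ ^ 3 + ζ ^ 4)) * u - 2 ≠ 0 := by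
    rw [hB]; exact mul_ne_zero (by norm_num) (mul_ne_zero h2' h3')
  rw [div_eq_div_iff (mul_ne_zero hBne (pow_ne_zero 2 h1'))
    (mul_ne_zero (mul_ne_zero h2' h3') (pow_ne_zero 2 h1'))]
  linear_combination ((-6485:ℂ) + (-2973:ℂ) * u^1 + (1039:ℂ) * u^2 + (-6793:ℂ) * u^3 + (1030:ℂ) * u^4 + (2950:ℂ) * u^5 + (-2048:ℂ) * u^6 + (304:ℂ) * u^7 + (-48:ℂ) * u^8 + (-6485:ℂ) * ζ^1 + (-2973:ℂ) * ζ^1 * u^1 + (1235:ℂ) * ζ^1 * u^2 + (-6303:ℂ) * ζ^1 * u^3 + (1620:ℂ) * ζ^1 * u^4 + (3490:ℂ) * ζ^1 * u^5 + (-1718:ℂ) * ζ^1 * u^6 + (430:ℂ) * ζ^1 * u^7 + (-8:ℂ) * ζ^1 * u^8 + (-6485:ℂ) * ζ^2 + (-3316:ℂ) * ζ^2 * u^1 + (759:ℂ) * ζ^2 * u^2 + (-6269:ℂ) * ζ^2 * u^3 + (1674:ℂ) * ζ^2 * u^4 + (3277:ℂ) * ζ^2 * u^5 + (-1872:ℂ)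 * ζ^2 * u^6 + (352:ℂ) * ζ^2 * u^7 + (-32:ℂ) * ζ^2 * u^8 + (-6485:ℂ) * ζ^3 + (-3463:ℂ) * ζ^3 * u^1 + (254:ℂ) * ζ^3 * u^2 + (-6880:ℂ) * ζ^3 * u^3 + (1281:ℂ) * ζ^3 * u^4 + (3033:ℂ) * ζ^3 * u^5 + (-1982:ℂ) * ζ^3 * u^6 + (346:ℂ) * ζ^3 * u^7 + (-32:ℂ) * ζ^3 * u^8 + (-6485:ℂ) * ζ^4 + (-2910:ℂ) * ζ^4 * u^1 + (1244:ℂ) * ζ^4 * u^2 + (-6504:ℂ) * ζ^4 * u^3 + (1447:ℂ) * ζ^4 * u^4 + (3450:ℂ) * ζ^4 * u^5 + (-1742:ℂ) * ζ^4 * u^6 + (428:ℂ) * ζ^4 * u^7 + (-6828:ℂ) * ζ^5 + (-3548:ℂ) * ζ^5 * u^1 + (1090:ℂ) * ζ^5 * u^2 + (-6398:ℂ) * ζ^5 * u^3 + (1192:ℂ) * ζ^5 * u^4 + (3082:ℂ) * ζ^5 * u^5 + (-1994:ℂ) * ζ^5 * u^6 + (276:ℂ) * ζ^5 * u^7 +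 (-48:ℂ) * ζ^5 * u^8 + (-6632:ℂ) * ζ^6 + (-3559:ℂ) * ζ^6 * u^1 + (628:ℂ) * ζ^6 * u^2 + (-6438:ℂ) * ζ^6 * u^3 + (1540:ℂ) * ζ^6 * u^4 + (3321:ℂ) * ζ^6 * u^5 + (-1808:ℂ) * ζ^6 * u^6 + (396:ℂ) * ζ^6 * u^7 + (-8:ℂ) * ζ^6 * u^8 + (-6275:ℂ) * ζ^7 + (-2867:ℂ) * ζ^7 * u^1 + (846:ℂ) * ζ^7 * u^2 + (-6700:ℂ) * ζ^7 * u^3 + (1439:ℂ) * ζ^7 * u^4 + (3387:ℂ) * ζ^7 * u^5 + (-1850:ℂ) * ζ^7 * u^6 + (340:ℂ) * ζ^7 * u^7 + (-6437:ℂ) * ζ^8 + (-3014:ℂ) * ζ^8 * u^1 + (1178:ℂ) * ζ^8 * u^2 + (-6474:ℂ) * ζ^8 * u^3 + (1203:ℂ) * ζ^8 * u^4 + (3264:ℂ) * ζ^8 * u^5 + (-1924:ℂ) * ζ^8 * u^6 + (212:ℂ) * ζ^8 * u^7 + (-32:ℂ) * ζ^8 * u^8 + (-6776:ℂ) * ζ^9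 + (-3906:ℂ) * ζ^9 * u^1 + (742:ℂ) * ζ^9 * u^2 + (-6230:ℂ) * ζ^9 * u^3 + (1346:ℂ) * ζ^9 * u^4 + (3532:ℂ) * ζ^9 * u^5 + (-1608:ℂ) * ζ^9 * u^6 + (308:ℂ) * ζ^9 * u^7 + (-6568:ℂ) * ζ^10 + (-3679:ℂ) * ζ^10 * u^1 + (825:ℂ) * ζ^10 * u^2 + (-6291:ℂ) * ζ^10 * u^3 + (1035:ℂ) * ζ^10 * u^4 + (3418:ℂ) * ζ^10 * u^5 + (-1656:ℂ) * ζ^10 * u^6 + (188:ℂ) * ζ^10 * u^7 + (-6415:ℂ) * ζ^11 + (-3671:ℂ) * ζ^11 * u^1 + (861:ℂ) * ζ^11 * u^2 + (-6125:ℂ) * ζ^11 * u^3 + (822:ℂ) * ζ^11 * u^4 + (3460:ℂ) * ζ^11 * u^5 + (-1480:ℂ) * ζ^11 * u^6 + (116:ℂ) * ζ^11 * u^7 + (-8:ℂ) * ζ^11 * u^8 + (-6339:ℂ) * ζ^12 + (-4179:ℂ) * ζ^12 * u^1 + (361:ℂ) * ζ^12 * u^2 + (-5941:ℂ) * ζ^12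 * u^3 + (598:ℂ) * ζ^12 * u^4 + (3464:ℂ) * ζ^12 * u^5 + (-1136:ℂ) * ζ^12 * u^6 + (140:ℂ) * ζ^12 * u^7 + (-6056:ℂ) * ζ^13 + (-4404:ℂ) * ζ^13 * u^1 + (-24:ℂ) * ζ^13 * u^2 + (-5724:ℂ) * ζ^13 * u^3 + (152:ℂ) * ζ^13 * u^4 + (3124:ℂ) * ζ^13 * u^5 + (-1016:ℂ) * ζ^13 * u^6 + (60:ℂ) * ζ^13 * u^7 + (-5744:ℂ) * ζ^14 + (-4636:ℂ) * ζ^14 * u^1 + (-448:ℂ) * ζ^14 * u^2 + (-5484:ℂ) * ζ^14 * u^3 + (-256:ℂ) * ζ^14 * u^4 + (2892:ℂ) * ζ^14 * u^5 + (-752:ℂ) * ζ^14 * u^6 + (28:ℂ) * ζ^14 * u^7 + (-5224:ℂ) * ζ^15 + (-4628:ℂ) * ζ^15 * u^1 + (-876:ℂ) * ζ^15 * u^2 + (-5196:ℂ) * ζ^15 * u^3 + (-708:ℂ) * ζ^15 * u^4 + (2492:ℂ) * ζ^15 * u^5 + (-496:ℂ) * ζ^15 * u^6 + (28:ℂ)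 * ζ^15 * u^7 + (-4432:ℂ) * ζ^16 + (-4300:ℂ) * ζ^16 * u^1 + (-1224:ℂ) * ζ^16 * u^2 + (-4596:ℂ) * ζ^16 * u^3 + (-924:ℂ) * ζ^16 * u^4 + (1960:ℂ) * ζ^16 * u^5 + (-348:ℂ) * ζ^16 * u^6 + (8:ℂ) * ζ^16 * u^7 + (-3624:ℂ) * ζ^17 + (-3892:ℂ) * ζ^17 * u^1 + (-1568:ℂ) * ζ^17 * u^2 + (-4040:ℂ) * ζ^17 * u^3 + (-1016:ℂ) * ζ^17 * u^4 + (1532:ℂ) * ζ^17 * u^5 + (-192:ℂ) * ζ^17 * u^6 + (-2912:ℂ) * ζ^18 + (-3352:ℂ) * ζ^18 * u^1 + (-1608:ℂ) * ζ^18 * u^2 + (-3552:ℂ) * ζ^18 * u^3 + (-1224:ℂ) * ζ^18 * u^4 + (1064:ℂ) * ζ^18 * u^5 + (-96:ℂ) * ζ^18 * u^6 + (-2128:ℂ) * ζ^19 + (-2480:ℂ) * ζ^19 * u^1 + (-1164:ℂ) * ζ^19 * u^2 + (-2648:ℂ) * ζ^19 * u^3 + (-1132:ℂ) * ζ^19 *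 u^4 + (656:ℂ) * ζ^19 * u^5 + (-48:ℂ) * ζ^19 * u^6 + (-1352:ℂ) * ζ^20 + (-1648:ℂ) * ζ^20 * u^1 + (-888:ℂ) * ζ^20 * u^2 + (-1820:ℂ) * ζ^20 * u^3 + (-820:ℂ) * ζ^20 * u^4 + (396:ℂ) * ζ^20 * u^5 + (-12:ℂ) * ζ^20 * u^6 + (-816:ℂ) * ζ^21 + (-1080:ℂ) * ζ^21 * u^1 + (-776:ℂ) * ζ^21 * u^2 + (-1372:ℂ) * ζ^21 * u^3 + (-656:ℂ) * ζ^21 * u^4 + (204:ℂ) * ζ^21 * u^5 + (-480:ℂ) * ζ^22 + (-540:ℂ) * ζ^22 * u^1 + (-296:ℂ) * ζ^22 * u^2 + (-812:ℂ) * ζ^22 * u^3 + (-496:ℂ) * ζ^22 * u^4 + (80:ℂ) * ζ^22 * u^5 + (-224:ℂ) * ζ^23 + (-108:ℂ) * ζ^23 * u^1 + (136:ℂ) * ζ^23 * u^2 + (-276:ℂ) * ζ^23 * u^3 + (-272:ℂ) * ζ^23 * u^4 + (24:ℂ) * ζ^23 * u^5 + (-64:ℂ) * ζ^24 + (44:ℂ)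 * ζ^24 * u^1 + (144:ℂ) * ζ^24 * u^2 + (-96:ℂ) * ζ^24 * u^3 + (-128:ℂ) * ζ^24 * u^4 + (4:ℂ) * ζ^24 * u^5 + (-8:ℂ) * ζ^25 + (76:ℂ) * ζ^25 * u^1 + (112:ℂ) * ζ^25 * u^2 + (-36:ℂ) * ζ^25 * u^3 + (-64:ℂ) * ζ^25 * u^4 + (100:ℂ) * ζ^26 * u^1 + (176:ℂ) * ζ^26 * u^2 + (52:ℂ) * ζ^26 * u^3 + (-24:ℂ) * ζ^26 * u^4 + (76:ℂ) * ζ^27 * u^1 + (148:ℂ) * ζ^27 * u^2 + (68:ℂ) * ζ^27 * u^3 + (-4:ℂ) * ζ^27 * u^4 + (28:ℂ) * ζ^28 * u^1 + (56:ℂ) * ζ^28 * u^2 + (28:ℂ) * ζ^28 * u^3 + (4:ℂ) * ζ^29 * u^1 + (8:ℂ) * ζ^29 * u^2 + (4:ℂ) * ζ^29 * u^3) * h5 / 4 + ((-6485:ℂ) + (-2973:ℂ) * u^1 + (1382:ℂ) * u^2 + (-5960:ℂ) * u^3 + (1835:ℂ) * u^4 + (3475:ℂ) * u^5 + (-1768:ℂ)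 * u^6 + (402:ℂ) * u^7 + (-20:ℂ) * u^8) * hΦ / 4
end
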